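/- Let γ > 0 and define polynomials φ_{j,k} ∈ ℂ[z₁,z₂] recursively by φ_{0,0} = 1, and φ_{j,k} = z₁^j z₂^k + (√2/2)·(1/(γ+j+k))·(k·φ_{j,k−1} + j·φ_{j−1,k}) for (j,k) ≠ (0,0) (terms with a negative index are omitted). Then the coefficient of z₁^m z₂^n in φ_{j,k} equals (√2/2)^{j+k−m−n} · ((γ)_{m+n+1}/(γ)_{j+k+1}) · (j! k!)/(m! n!) · ((j+k−m−n)!)/((j−m)! (k−n)!) for 0 ≤ m ≤ j and 0 ≤ n ≤ k, and equals 0 otherwise. -/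
import Mathlib


open MvPolynomial

/-- Pochhammer symbol `(γ)_n = γ(γ+1)⋯(γ+n−1)`. -/
noncomputable def poch (γ : ℝ) (n : ℕ) : ℝ := ∏ i ∈ Finset.range n, (γ + i)

/-- The exponent `(m,n)` as a monomial degree in two variables. -/
noncomputable def deg2 (m n : ℕ) : Fin 2 →₀ ℕ := Finsupp.single 0 m + Finsupp.single 1 n

/-- Closed-form coefficients of the weighted orthogonal polynomials. -/
noncomputable def c (γ : ℝ) (j k m n : ℕ) : ℝ :=
  (Real.sqrt 2 / 2) ^ (j + k - m - n) * (poch γ (m + n + 1) / poch γ (j + k + 1)) *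
    ((j.factorial * k.factorial : ℕ) / ((m.factorial * n.factorial : ℕ) : ℝ)) *
    (((j + k - m - n).factorial : ℝ) / (((j - m).factorial * (k - n).factorial : ℕ) : ℝ))

lemma poch_succ (γ : ℝ) (n : ℕ) : poch γ (n+1) = poch γ n * (γ + n) :=
  Finset.prod_range_succ _ _

lemma poch_pos {γ : ℝ} (hγ : 0 < γ) (n : ℕ) : 0 < poch γ n :=
  Finset.prod_pos fun i _ => by positivity

lemma deg2_eq_iff (a b m n : ℕ) : deg2 a b = deg2 m n ↔ a = m ∧ b = n := by
  constructor
  · intro h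
    have h0 := congrArg (fun f => f 0) h
    have h1 := congrArg (fun f => f 1) h
    simp [deg2, Finsupp.single_apply] at h0 h1
    exact ⟨h0, h1⟩
  · rintro ⟨rfl, rfl⟩; rfl

lemma X0_pow (a : ℕ) : (X 0 ^ a : MvPolynomial (Fin 2) ℂ) = monomial (deg2 a 0) 1 := by
  rw [X_pow_eq_monomial, deg2]; simp

lemma X1_pow (b : ℕ) : (X 1 ^ b : MvPolynomial (Fin 2) ℂ) = monomial (deg2 0 b) 1 := by
  rw [X_pow_eq_monomial, deg2]; simp

lemma Xpow_mul (a b : ℕ) : (X 0 ^ a * X 1 ^ b : MvPolynomial (Fin 2) ℂ) = monomial (deg2 a b) 1 := by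
  rw [X_pow_eq_monomial, X_pow_eq_monomial, monomial_mul, one_mul, deg2]

lemma c_apply (γ : ℝ) (m n a b : ℕ) : c γ (m+a) (n+b) m n =
    (Real.sqrt 2 / 2) ^ (a + b) * (poch γ (m + n + 1) / poch γ (m + n + (a + b) + 1)) *
    ((m+a).factorial * (n+b).factorial / ((m.factorial : ℝ) * n.factorial)) *
    ((a+b).factorial / ((a.factorial : ℝ) * b.factorial)) := by
  have h1 : m + a + (n + b) - m - n = a + b := by omega
  have h2 : m + a - m = a := by omega
  have h3 : n + b - n = b := by omega
  have h4 : m + a + (n + b) + 1 = m + n + (a + b) + 1 := by omega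
  rw [c, h1, h2, h3, h4]
  push_cast
  ring

lemma c_diag {γ : ℝ} (hγ : 0 < γ) (j k : ℕ) : c γ j k j k = 1 := by
  have := c_apply γ j k 0 0
  simp at this
  rw [this, div_self (poch_pos hγ _).ne', one_mul,
    div_self (by positivity : ((j.factorial : ℝ) * k.factorial) ≠ 0)]


lemma key_a {γ : ℝ} (hγ : 0 < γ) (j K m : ℕ) (hm : m ≤ j) :
    c γ (j+1) K m K = Real.sqrt 2 / 2 * (1 / (γ + (j+1) + K)) * ((j+1) * c γ j K m K) := by
  obtain ⟨a, rfl⟩ := Nat.exists_eq_add_of_le hm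
  have A := c_apply γ m K (a+1) 0
  have B := c_apply γ m K a 0
  simp only [Nat.add_zero] at A B
  rw [show m + a + 1 = m + (a + 1) from by omega, A, B,
    show m + K + (a + 1) + 1 = (m + K + a + 1) + 1 from by omega,
    poch_succ γ (m + K + a + 1),
    show m + (a + 1) = m + a + 1 from by omega]
  simp only [Nat.factorial_succ]
  have hp1 := (poch_pos hγ (m + K + 1)).ne'
  have hp2 := (poch_pos hγ (m + K + a + 1)).ne'
  have hq : (γ + (m + K + a + 1 : ℕ) : ℝ) ≠ 0 := by positivity
  have hfm : (m.factorial : ℝ) ≠ 0 := by positivity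
  have hfK : (K.factorial : ℝ) ≠ 0 := by positivity
  have hfa : (a.factorial : ℝ) ≠ 0 := by positivity
  push_cast
  field_simp
  ring

lemma key_b {γ : ℝ} (hγ : 0 < γ) (J k n : ℕ) (hn : n ≤ k) :
    c γ J (k+1) J n = Real.sqrt 2 / 2 * (1 / (γ + J + (k+1))) * ((k+1) * c γ J k J n) := by
  obtain ⟨b, rfl⟩ := Nat.exists_eq_add_of_le hn
  have A := c_apply γ J n 0 (b+1)
  have B := c_apply γ J n 0 b
  simp only [Nat.add_zero, Nat.zero_add] at A B
  rw [show n + b + 1 = n + (b + 1) from by omega, A, B,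
    show J + n + (b + 1) + 1 = (J + n + b + 1) + 1 from by omega,
    poch_succ γ (J + n + b + 1),
    show n + (b + 1) = n + b + 1 from by omega]
  simp only [Nat.factorial_succ]
  have hp1 := (poch_pos hγ (J + n + 1)).ne'
  have hp2 := (poch_pos hγ (J + n + b + 1)).ne'
  have hq : (γ + (J + n + b + 1 : ℕ) : ℝ) ≠ 0 := by positivity
  have hfn : (n.factorial : ℝ) ≠ 0 := by positivity
  have hfJ : (J.factorial : ℝ) ≠ 0 := by positivity
  have hfb : (b.factorial : ℝ) ≠ 0 := by positivity
  push_cast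
  field_simp
  ring

lemma key_int {γ : ℝ} (hγ : 0 < γ) (J K m n : ℕ) (hm : m ≤ J) (hn : n ≤ K) :
    c γ (J+1) (K+1) m n = Real.sqrt 2 / 2 * (1 / (γ + (J+1) + (K+1))) *
      ((K+1) * c γ (J+1) K m n + (J+1) * c γ J (K+1) m n) := by
  obtain ⟨a, rfl⟩ := Nat.exists_eq_add_of_le hm
  obtain ⟨b, rfl⟩ := Nat.exists_eq_add_of_le hn
  rw [show m + a + 1 = m + (a+1) from by omega, show n + b + 1 = n + (b+1) from by omega,
    c_apply γ m n (a+1) (b+1), c_apply γ m n (a+1) b, c_apply γ m n a (b+1),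
    show a + 1 + (b + 1) = a + b + 1 + 1 from by omega,
    show a + (b + 1) = a + b + 1 from by omega,
    show a + 1 + b = a + b + 1 from by omega,
    show m + (a + 1) = m + a + 1 from by omega,
    show n + (b + 1) = n + b + 1 from by omega,
    show m + n + (a + b + 1 + 1) + 1 = (m + n + (a + b + 1) + 1) + 1 from by omega,
    poch_succ γ (m + n + (a + b + 1) + 1)]
  simp only [Nat.factorial_succ]
  have hp1 := (poch_pos hγ (m + n + 1)).ne'
  have hp2 := (poch_pos hγ (m + n + (a + b + 1) + 1)).ne'
  have hq : (γ + (m + n + (a + b + 1) + 1 : ℕ) : ℝ) ≠ 0 := by positivity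
  have hfm : (m.factorial : ℝ) ≠ 0 := by positivity
  have hfn : (n.factorial : ℝ) ≠ 0 := by positivity
  have hfa : (a.factorial : ℝ) ≠ 0 := by positivity
  have hfb : (b.factorial : ℝ) ≠ 0 := by positivity
  push_cast
  field_simp
  ring

lemma deg2_eq_zero (m n : ℕ) : deg2 m n = 0 ↔ m = 0 ∧ n = 0 := by
  rw [show (0 : Fin 2 →₀ ℕ) = deg2 0 0 from by simp [deg2], deg2_eq_iff]

theorem recursion_solves_closed_form (γ : ℝ) (hγ : 0 < γ)
    (φ : ℕ → ℕ → MvPolynomial (Fin 2) ℂ)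
    (h00 : φ 0 0 = 1)
    (hj0 : ∀ j : ℕ, φ (j + 1) 0 =
      X 0 ^ (j + 1) +
        MvPolynomial.C (((Real.sqrt 2 / 2) * (1 / (γ + (j + 1) + 0)) * (j + 1) : ℝ) : ℂ) * φ j 0)
    (h0k : ∀ k : ℕ, φ 0 (k + 1) =
      X 1 ^ (k + 1) +
        MvPolynomial.C (((Real.sqrt 2 / 2) * (1 / (γ + 0 + (k + 1))) * (k + 1) : ℝ) : ℂ) * φ 0 k)
    (hjk : ∀ j k : ℕ, φ (j + 1) (k + 1) =
      X 0 ^ (j + 1) * X 1 ^ (k + 1) +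
        MvPolynomial.C (((Real.sqrt 2 / 2) * (1 / (γ + (j + 1) + (k + 1))) : ℝ) : ℂ) *
          (MvPolynomial.C (((k + 1 : ℕ) : ℂ)) * φ (j + 1) k +
            MvPolynomial.C (((j + 1 : ℕ) : ℂ)) * φ j (k + 1))) :
    ∀ j k m n : ℕ,
      (φ j k).coeff (deg2 m n) =
        if m ≤ j ∧ n ≤ k then ((c γ j k m n : ℝ) : ℂ) else 0 := by
  suffices H : ∀ N j k, j + k = N → ∀ m n : ℕ,
      (φ j k).coeff (deg2 m n) =
        if m ≤ j ∧ n ≤ k then ((c γ j k m n : ℝ) : ℂ) else 0 by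
    intro j k m n; exact H (j + k) j k rfl m n
  intro N
  induction N using Nat.strong_induction_on with
  | _ N ih =>
  intro j k hN m n
  subst hN
  rcases j with _ | J <;> rcases k with _ | K
  · -- (0,0)
    rw [h00, MvPolynomial.coeff_one]
    simp only [eq_comm (b := deg2 m n), deg2_eq_zero]
    by_cases h : m = 0 ∧ n = 0
    · obtain ⟨rfl, rfl⟩ := h
      rw [if_pos ⟨rfl, rfl⟩, if_pos ⟨le_refl _, le_refl _⟩, c_diag hγ]
      norm_num
    · rw [if_neg h, if_neg (by omega)]
  · -- (0, K+1)
    have IH := ih (0 + K) (by omega) 0 K rfl m n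
    rw [h0k K, X1_pow, coeff_add, coeff_monomial, coeff_C_mul, IH]
    simp only [deg2_eq_iff]
    by_cases hm : m = 0
    · subst hm
      by_cases hn : n ≤ K + 1
      · by_cases hn' : n = K + 1
        · subst hn'
          rw [if_pos ⟨rfl, rfl⟩, if_neg (by omega), if_pos (by omega), c_diag hγ]
          norm_num
        · have hn2 : n ≤ K := by omega
          rw [if_neg (by omega), if_pos (by omega), if_pos (by omega),
            key_b hγ 0 K n hn2]
          push_cast
          ring
      · rw [if_neg (by omega), if_neg (by omega), if_neg (by omega)]
        ring
    · rw [if_neg (by omega), if_neg (by omega), if_neg (by omega)]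
      ring
  · -- (J+1, 0)
    have IH := ih (J + 0) (by omega) J 0 rfl m n
    rw [hj0 J, X0_pow, coeff_add, coeff_monomial, coeff_C_mul, IH]
    simp only [deg2_eq_iff]
    by_cases hn : n = 0
    · subst hn
      by_cases hm : m ≤ J + 1
      · by_cases hm' : m = J + 1
        · subst hm'
          rw [if_pos ⟨rfl, rfl⟩, if_neg (by omega), if_pos (by omega), c_diag hγ]
          norm_num
        · have hm2 : m ≤ J := by omega
          rw [if_neg (by omega), if_pos (by omega), if_pos (by omega),
            key_a hγ J 0 m hm2]
          push_cast
          ring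
      · rw [if_neg (by omega), if_neg (by omega), if_neg (by omega)]
        ring
    · rw [if_neg (by omega), if_neg (by omega), if_neg (by omega)]
      ring
  · -- (J+1, K+1)
    have IH1 := ih (J + 1 + K) (by omega) (J + 1) K rfl m n
    have IH2 := ih (J + (K + 1)) (by omega) J (K + 1) rfl m n
    rw [hjk J K, Xpow_mul, coeff_add, coeff_monomial, coeff_C_mul, coeff_add,
      coeff_C_mul, coeff_C_mul, IH1, IH2]
    simp only [deg2_eq_iff]
    by_cases hm : m ≤ J + 1
    · by_cases hn : n ≤ K + 1
      · by_cases hm' : m = J + 1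
        · subst hm'
          by_cases hn' : n = K + 1
          · subst hn'
            rw [if_pos ⟨rfl, rfl⟩, if_neg (by omega), if_neg (by omega),
              if_pos (by omega), c_diag hγ]
            norm_num
          · have hn2 : n ≤ K := by omega
            rw [if_neg (by omega), if_pos (by omega), if_neg (by omega),
              if_pos (by omega), key_b hγ (J + 1) K n hn2]
            push_cast
            ring
        · have hm2 : m ≤ J := by omega
          by_cases hn' : n = K + 1
          · subst hn'
            rw [if_neg (by omega), if_neg (by omega), if_pos (by omega),
              if_pos (by omega), key_a hγ J (K + 1) m hm2]
            push_cast
            ring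
          · have hn2 : n ≤ K := by omega
            rw [if_neg (by omega), if_pos (by omega), if_pos (by omega),
              if_pos (by omega), key_int hγ J K m n hm2 hn2]
            push_cast
            ring
      · rw [if_neg (by omega), if_neg (by omega), if_neg (by omega), if_neg (by omega)]
        ring
    · rw [if_neg (by omega), if_neg (by omega), if_neg (by omega), if_neg (by omega)]
      ring
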